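/- Let n ≥ 1 be an integer, g > 0 real, and let f and h be symmetric polynomials in n complex variables. For ρ > 0 define (f,h)_ρ = (1/n!) (∏_{j=1}^n ∮_{|z_j|=ρ} dz_j/(2πi z_j)) (∏_{j≠k}^n (1 − z_j/z_k))^g · f(z) · h̄(1/z_1,…,1/z_n), where h̄ is the polynomial whose coefficients are the complex conjugates of those of h. Then (f,h)_ρ is independent of ρ: for all ρ, ρ' > 0, (f,h)_ρ = (f,h)_{ρ'}. -/

import Mathlib

/-!
Rescaling `z ↦ ρ • z` moves every contour to the unit circle without changing the weight, and
expands `f(ρz) h̄(1/(ρz))` into terms `ρ ^ (|α| - |β|)` times the weighted monomials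
`W(z) z^α z^(-β)`. Rotating all variables simultaneously by a unimodular `c` leaves the iterated
contour integral unchanged but multiplies such a term by `c ^ (|α| - |β|)`, so the terms with
`|α| ≠ |β|` integrate to zero and the remaining ones do not depend on `ρ`. The iterated integral is
linear on bounded measurable integrands because it is a torus integral.
-/

noncomputable section

/-- `(1/(2πi)) ∮_{|w|=ρ} f(w)/w dw`, i.e. the contour integral `∮ dz/(2πiz) f(z)`. -/
def circAvg (ρ : ℝ) (f : ℂ → ℂ) : ℂ :=
  (2 * (Real.pi : ℂ) * Complex.I)⁻¹ * ∮ w in C(0, ρ), f w / w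

/-- Iterated contour integral `∏_{k=1}^M ∮_{|z_k|=ρ} dz_k/(2πiz_k)`. -/
def multiCirc : (M : ℕ) → ℝ → ((Fin M → ℂ) → ℂ) → ℂ
  | 0, _, f => f fun i => i.elim0
  | M + 1, ρ, f => circAvg ρ fun w => multiCirc M ρ fun v => f (Fin.cons w v)

/-- The scalar product `(f,h)_ρ = (1/n!) (∏_j ∮_{|z_j|=ρ} dz_j/(2πiz_j))
(∏_{j≠k}(1-z_j/z_k))^g f(z) h̄(1/z)`, where `h̄` has the complex conjugate coefficients. -/
def prodInner (n : ℕ) (g : ℝ) (f h : MvPolynomial (Fin n) ℂ) (ρ : ℝ) : ℂ :=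
  ((Nat.factorial n : ℂ))⁻¹ *
    multiCirc n ρ fun z =>
      (∏ j : Fin n, ∏ k : Fin n, if j ≠ k then 1 - z j / z k else 1) ^ (g : ℂ) *
        MvPolynomial.eval z f *
        MvPolynomial.eval (fun j => (z j)⁻¹) (MvPolynomial.map (starRingEnd ℂ) h)

open MeasureTheory Complex Real ComplexConjugate

section

variable {ρ : ℝ}

theorem circAvg_eq_circleAverage (hρ : ρ ≠ 0) (f : ℂ → ℂ) :
    circAvg ρ f = circleAverage f 0 ρ := by
  simp only [circAvg, circleAverage_eq_circleIntegral hρ, sub_zero, smul_eq_mul, div_eq_inv_mul]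

theorem circAvg_comp_mul (hρ : ρ ≠ 0) (f : ℂ → ℂ) :
    circAvg ρ f = circAvg 1 (fun w => f (ρ * w)) := by
  rw [circAvg_eq_circleAverage hρ, circAvg_eq_circleAverage one_ne_zero,
    circleAverage_eq_circleAverage_zero_one]
  simp

theorem circAvg_comp_exp_mul (hρ : ρ ≠ 0) (η : ℝ) (f : ℂ → ℂ) :
    circAvg ρ (fun w => f (exp (η * I) * w)) = circAvg ρ f := by
  rw [circAvg_eq_circleAverage hρ, circAvg_eq_circleAverage hρ,
    circleAverage_eq_integral_add (f := f) η, circleAverage]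
  simp only [circleMap_zero, ofReal_add, add_mul, Complex.exp_add, mul_comm (cexp (η * I)),
    mul_assoc]

theorem circAvg_const_mul (a : ℂ) (f : ℂ → ℂ) : circAvg ρ (fun w => a * f w) = a * circAvg ρ f := by
  simp only [circAvg, mul_div_assoc, circleIntegral.integral_const_mul]
  ring

end

theorem Fin.smul_cons {α β : Type*} [SMul α β] {n : ℕ} (c : α) (y : β) (v : Fin n → β) :
    c • (Fin.cons y v : Fin (n + 1) → β) = Fin.cons (c • y) (c • v) :=
  Matrix.smul_cons c y v

section

variable {n : ℕ}

theorem torusIntegral_finsetSum {E : Type*} [NormedAddCommGroup E] [NormedSpace ℂ E] {ι : Type*}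
    {s : Finset ι} {F : ι → (Fin n → ℂ) → E} {c : Fin n → ℂ} {R : Fin n → ℝ}
    (hF : ∀ i ∈ s, TorusIntegrable (F i) c R) :
    (∯ z in T(c, R), ∑ i ∈ s, F i z) = ∑ i ∈ s, ∯ z in T(c, R), F i z := by
  simp only [torusIntegral, Finset.smul_sum]
  exact integral_finsetSum s fun i hi => (hF i hi).function_integrable

theorem norm_torusMap_zero (R : Fin n → ℝ) (θ : Fin n → ℝ) (j : Fin n) :
    ‖torusMap 0 R θ j‖ = |R j| := by
  simp [torusMap]

theorem torusIntegrable_of_norm_le {F : (Fin n → ℂ) → ℂ} (hF : Measurable F) {c : Fin n → ℂ}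
    {R : Fin n → ℝ} {C : ℝ} (hC : ∀ θ, ‖F (torusMap c R θ)‖ ≤ C) : TorusIntegrable F c R := by
  have : Continuous (torusMap c R) := by unfold torusMap; fun_prop
  exact IntegrableOn.of_bound measure_Icc_lt_top (hF.comp this.measurable).aestronglyMeasurable C
    (ae_of_all _ hC)

end

section

variable {M : ℕ} {ρ : ℝ}

theorem multiCirc_const_mul (a : ℂ) (F : (Fin M → ℂ) → ℂ) :
    multiCirc M ρ (fun z => a * F z) = a * multiCirc M ρ F := by
  induction M with
  | zero => rfl
  | succ M ih => simp only [multiCirc, ih, circAvg_const_mul]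

theorem multiCirc_comp_smul (hρ : ρ ≠ 0) (F : (Fin M → ℂ) → ℂ) :
    multiCirc M ρ F = multiCirc M 1 (fun z => F ((ρ : ℂ) • z)) := by
  induction M with
  | zero => exact congrArg F (Subsingleton.elim _ _)
  | succ M ih => simp only [multiCirc, ih, circAvg_comp_mul hρ, Fin.smul_cons, smul_eq_mul]

theorem multiCirc_comp_exp_smul (hρ : ρ ≠ 0) (η : ℝ) (F : (Fin M → ℂ) → ℂ) :
    multiCirc M ρ (fun z => F (exp (η * I) • z)) = multiCirc M ρ F := by
  induction M with
  | zero => exact congrArg F (Subsingleton.elim _ _)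
  | succ M ih =>
    simp only [multiCirc, Fin.smul_cons, smul_eq_mul]
    calc _ = circAvg ρ fun w => multiCirc M ρ fun v => F (Fin.cons (exp (η * I) * w) v) := by
          congr 1 with w
          exact ih fun v => F (Fin.cons (exp (η * I) * w) v)
      _ = _ := circAvg_comp_exp_mul hρ η fun w => multiCirc M ρ fun v => F (Fin.cons w v)

theorem multiCirc_eq_zero_of_map_smul (hρ : ρ ≠ 0) {k : ℤ} (hk : k ≠ 0) {F : (Fin M → ℂ) → ℂ}
    (hF : ∀ c : ℂ, ‖c‖ = 1 → ∀ z, F (c • z) = c ^ k * F z) :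
    multiCirc M ρ F = 0 := by
  -- rotating all variables by `exp (π i / k)` multiplies `F` by `-1`
  have hc : exp ((π / k : ℝ) * I) ^ k = -1 := by
    rw [← Complex.exp_int_mul, ← exp_pi_mul_I]
    congr 1
    push_cast
    field_simp
  have hrot := multiCirc_comp_exp_smul hρ (π / k) F
  simp only [hF _ (norm_exp_ofReal_mul_I _), hc, multiCirc_const_mul] at hrot
  linear_combination -hrot / 2

theorem torusIntegrable_inv_prod_mul (hρ : 0 ≤ ρ) {F : (Fin M → ℂ) → ℂ} (hF : Measurable F) {C : ℝ}
    (hC : ∀ z, (∀ j, ‖z j‖ = ρ) → ‖F z‖ ≤ C) :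
    TorusIntegrable (fun z => (∏ j, z j)⁻¹ * F z) 0 fun _ => ρ := by
  refine torusIntegrable_of_norm_le (by fun_prop) (C := (ρ ^ M)⁻¹ * C) fun θ => ?_
  simp only [norm_mul, norm_inv, norm_prod, norm_torusMap_zero, abs_of_nonneg hρ,
    Finset.prod_const, Finset.card_univ, Fintype.card_fin]
  gcongr
  exact hC _ fun j => by rw [norm_torusMap_zero, abs_of_nonneg hρ]

theorem multiCirc_eq_torusIntegral (hρ : 0 ≤ ρ) {F : (Fin M → ℂ) → ℂ} (hF : Measurable F) {C : ℝ}
    (hC : ∀ z, (∀ j, ‖z j‖ = ρ) → ‖F z‖ ≤ C) :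
    multiCirc M ρ F = (2 * π * I : ℂ)⁻¹ ^ M * ∯ z in T(0, fun _ => ρ), (∏ j, z j)⁻¹ * F z := by
  induction M with
  | zero =>
    simp only [multiCirc, torusIntegral_dim0, pow_zero, Finset.univ_eq_empty, Finset.prod_empty,
      inv_one, one_mul]
    exact congrArg F (Subsingleton.elim _ _)
  | succ M ih =>
    have hslice : ∀ w ∈ Metric.sphere (0 : ℂ) ρ, multiCirc M ρ (fun v => F (Fin.cons w v)) =
        (2 * π * I : ℂ)⁻¹ ^ M * ∯ y in T(0, fun _ => ρ), (∏ j, y j)⁻¹ * F (Fin.cons w y) := by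
      intro w hw
      refine ih (by fun_prop) fun v hv => hC _ fun j => ?_
      cases j using Fin.cases <;> simp_all
    rw [torusIntegral_succ (torusIntegrable_inv_prod_mul hρ hF hC), multiCirc, circAvg,
      circleIntegral.integral_congr hρ
      (g := fun w => (2 * π * I : ℂ)⁻¹ ^ M *
        (w⁻¹ * ∯ y in T(0, fun _ => ρ), (∏ j, y j)⁻¹ * F (Fin.cons w y)))
      fun w hw => by simp only [hslice w hw]; ring]
    simp only [show (0 : Fin (M + 1) → ℂ) ∘ Fin.succ = 0 from rfl,
      show (fun _ : Fin (M + 1) => ρ) ∘ Fin.succ = fun _ => ρ from rfl, Pi.zero_apply,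
      Fin.prod_cons, mul_inv, mul_assoc, torusIntegral_const_mul,
      circleIntegral.integral_const_mul]
    ring

theorem multiCirc_finsetSum (hρ : 0 ≤ ρ) {ι : Type*} {s : Finset ι} {F : ι → (Fin M → ℂ) → ℂ}
    (hF : ∀ i ∈ s, Measurable (F i)) (hC : ∀ i ∈ s, ∃ C, ∀ z, (∀ j, ‖z j‖ = ρ) → ‖F i z‖ ≤ C) :
    multiCirc M ρ (fun z => ∑ i ∈ s, F i z) = ∑ i ∈ s, multiCirc M ρ (F i) := by
  choose! C hC using hC
  have hsum : ∀ z, (∀ j, ‖z j‖ = ρ) → ‖∑ i ∈ s, F i z‖ ≤ ∑ i ∈ s, C i := fun z hz =>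
    (norm_sum_le _ _).trans (Finset.sum_le_sum fun i hi => hC i hi z hz)
  rw [multiCirc_eq_torusIntegral hρ (by fun_prop) hsum,
    Finset.sum_congr rfl fun i hi => multiCirc_eq_torusIntegral hρ (hF i hi) (hC i hi),
    ← Finset.mul_sum, ← torusIntegral_finsetSum fun i hi =>
      torusIntegrable_inv_prod_mul hρ (hF i hi) (hC i hi)]
  simp only [Finset.mul_sum]

end

theorem MvPolynomial.eval_smul_eq_sum {R σ : Type*} [CommSemiring R] [Fintype σ]
    (f : MvPolynomial σ R) (c : R) (x : σ → R) :
    eval (c • x) f = ∑ d ∈ f.support, f.coeff d * c ^ (∑ i, d i) * ∏ i, x i ^ d i := by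
  simp only [eval_eq', Pi.smul_apply, smul_eq_mul, mul_pow, Finset.prod_mul_distrib,
    Finset.prod_pow_eq_pow_sum, mul_assoc]

section

variable {ι : Type*} [Fintype ι] [DecidableEq ι] {g : ℝ}

def jackWeight (g : ℝ) (z : ι → ℂ) : ℂ :=
  (∏ j, ∏ k, if j ≠ k then 1 - z j / z k else 1) ^ (g : ℂ)

theorem jackWeight_smul {c : ℂ} (hc : c ≠ 0) (z : ι → ℂ) :
    jackWeight g (c • z) = jackWeight g z := by
  simp only [jackWeight, Pi.smul_apply, smul_eq_mul, mul_div_mul_left _ _ hc]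

@[fun_prop]
theorem measurable_jackWeight : Measurable (jackWeight (ι := ι) g) := by
  refine (Finset.measurable_prod _ fun j _ => Finset.measurable_prod _ fun k _ => ?_).pow_const _
  split_ifs <;> fun_prop

theorem norm_jackWeight_le (hg : 0 ≤ g) {z : ι → ℂ} (hz : ∀ j, ‖z j‖ = 1) :
    ‖jackWeight g z‖ ≤ (2 ^ (Fintype.card ι ^ 2)) ^ g := by
  have hfactor : ∀ j k, ‖if j ≠ k then 1 - z j / z k else 1‖ ≤ 2 := fun j k => by
    split_ifs
    · calc ‖1 - z j / z k‖ ≤ ‖(1 : ℂ)‖ + ‖z j / z k‖ := norm_sub_le _ _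
        _ = 2 := by rw [norm_div, hz, hz]; norm_num
    · norm_num
  rw [jackWeight, norm_cpow_real]
  gcongr
  calc ‖∏ j, ∏ k, if j ≠ k then 1 - z j / z k else 1‖
      ≤ ∏ _j : ι, ∏ _k : ι, (2 : ℝ) := by
        simp only [norm_prod]
        gcongr with j _ k _
        exact hfactor j k
    _ = 2 ^ (Fintype.card ι ^ 2) := by simp [Finset.prod_const, ← pow_mul, sq]

def weightedMonomial (g : ℝ) (α β : ι →₀ ℕ) (z : ι → ℂ) : ℂ :=
  jackWeight g z * (∏ j, z j ^ α j) * ∏ j, (z j)⁻¹ ^ β j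

variable (α β : ι →₀ ℕ)

theorem weightedMonomial_smul {c : ℂ} (hc : c ≠ 0) (z : ι → ℂ) :
    weightedMonomial g α β (c • z) =
      c ^ ((∑ j, α j : ℕ) - (∑ j, β j : ℕ) : ℤ) * weightedMonomial g α β z := by
  simp only [weightedMonomial, jackWeight_smul hc, Pi.smul_apply, smul_eq_mul, mul_inv, mul_pow,
    Finset.prod_mul_distrib, Finset.prod_pow_eq_pow_sum, zpow_sub₀ hc, zpow_natCast]
  ring

theorem measurable_weightedMonomial : Measurable (weightedMonomial (ι := ι) g α β) := by
  unfold weightedMonomial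
  fun_prop

theorem norm_weightedMonomial_le (hg : 0 ≤ g) {z : ι → ℂ} (hz : ∀ j, ‖z j‖ = 1) :
    ‖weightedMonomial g α β z‖ ≤ (2 ^ (Fintype.card ι ^ 2)) ^ g := by
  simpa [weightedMonomial, norm_prod, hz] using norm_jackWeight_le hg hz

open MvPolynomial in
def jackIntegrand (g : ℝ) (f h : MvPolynomial ι ℂ) (z : ι → ℂ) : ℂ :=
  jackWeight g z * eval z f * eval z⁻¹ (map (starRingEnd ℂ) h)

open MvPolynomial in
theorem jackIntegrand_smul_eq_sum {c : ℂ} (hc : c ≠ 0) (f h : MvPolynomial ι ℂ) (z : ι → ℂ) :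
    jackIntegrand g f h (c • z) = ∑ p ∈ f.support ×ˢ h.support,
      f.coeff p.1 * conj (h.coeff p.2) * (c ^ (∑ j, p.1 j) * c⁻¹ ^ (∑ j, p.2 j)) *
        weightedMonomial g p.1 p.2 z := by
  have hinv : (c • z)⁻¹ = c⁻¹ • z⁻¹ := by ext j; simp [mul_comm]
  rw [jackIntegrand, hinv, jackWeight_smul hc, eval_smul_eq_sum, eval_smul_eq_sum,
    support_map_of_injective _ (starRingEnd ℂ).injective, Finset.sum_product, mul_assoc,
    Finset.sum_mul_sum, Finset.mul_sum]
  refine Finset.sum_congr rfl fun α _ => (Finset.mul_sum _ _ _).trans ?_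
  refine Finset.sum_congr rfl fun β _ => ?_
  simp only [weightedMonomial, coeff_map, Pi.inv_apply]
  ring

end

theorem multiCirc_weightedMonomial_eq_zero {n : ℕ} {g : ℝ} {α β : Fin n →₀ ℕ}
    (hαβ : ∑ j, α j ≠ ∑ j, β j) : multiCirc n 1 (weightedMonomial g α β) = 0 :=
  multiCirc_eq_zero_of_map_smul one_ne_zero (sub_ne_zero.mpr (by exact_mod_cast hαβ))
    fun _ hc => weightedMonomial_smul α β (norm_ne_zero_iff.mp (by simp [hc]))

theorem prodInner_eq_sum {n : ℕ} {g : ℝ} (hg : 0 ≤ g) (f h : MvPolynomial (Fin n) ℂ) {ρ : ℝ}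
    (hρ : 0 < ρ) :
    prodInner n g f h ρ = (n.factorial : ℂ)⁻¹ *
      ∑ p ∈ (f.support ×ˢ h.support).filter (fun p => ∑ j, p.1 j = ∑ j, p.2 j),
        f.coeff p.1 * conj (h.coeff p.2) * multiCirc n 1 (weightedMonomial g p.1 p.2) := by
  have hρ' : (ρ : ℂ) ≠ 0 := by exact_mod_cast hρ.ne'
  change (n.factorial : ℂ)⁻¹ * multiCirc n ρ (jackIntegrand g f h) = _
  rw [multiCirc_comp_smul hρ.ne', funext (jackIntegrand_smul_eq_sum hρ' f h),
    multiCirc_finsetSum zero_le_one ?measurable ?bounded, Finset.sum_filter]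
  case measurable => exact fun p _ => (measurable_weightedMonomial p.1 p.2).const_mul _
  case bounded =>
    exact fun p _ => ⟨_, fun z hz =>
      norm_mul_le_of_le le_rfl (norm_weightedMonomial_le p.1 p.2 hg hz)⟩
  congr 1
  refine Finset.sum_congr rfl fun p _ => ?_
  rw [multiCirc_const_mul]
  split_ifs with hp
  · rw [hp, ← mul_pow, mul_inv_cancel₀ hρ', one_pow, mul_one]
  · rw [multiCirc_weightedMonomial_eq_zero hp, mul_zero]

theorem statement15_general (n : ℕ) (g : ℝ) (hg : 0 < g)
    (f h : MvPolynomial (Fin n) ℂ) :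
    ∀ ρ ρ' : ℝ, 0 < ρ → 0 < ρ' → prodInner n g f h ρ = prodInner n g f h ρ' := by
  intro ρ ρ' hρ hρ'
  rw [prodInner_eq_sum hg.le f h hρ, prodInner_eq_sum hg.le f h hρ']

/-- for symmetric polynomials `f, h`, the scalar product `(f,h)_ρ` is
independent of the radius `ρ > 0`. -/
theorem statement15 (n : ℕ) (hn : 1 ≤ n) (g : ℝ) (hg : 0 < g)
    (f h : MvPolynomial (Fin n) ℂ) (hf : f.IsSymmetric) (hh : h.IsSymmetric) :
    ∀ ρ ρ' : ℝ, 0 < ρ → 0 < ρ' → prodInner n g f h ρ = prodInner n g f h ρ' :=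
  statement15_general n g hg f h
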